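/- (Existence of the t-SVD) Every A ∈ ℝ^{n₁×n₂×n₃} admits a factorization A = U * S * V^*, where U ∈ ℝ^{n₁×n₁×n₃} and V ∈ ℝ^{n₂×n₂×n₃} are orthogonal tensors (U^* * U = I and V^* * V = I) and S ∈ ℝ^{n₁×n₂×n₃} is f-diagonal (each frontal slice of S is a diagonal matrix). -/

import Mathlib

/-
The DFT along the tubes (third mode) is injective and turns the t-product into the slice-wise
matrix product, the tensor conjugate transpose into the slice-wise conjugate transpose and the
identity tensor into identity slices. The DFT of a real tensor is conjugate-symmetric,
`F(-i) = conj F(i)`, and conversely every conjugate-symmetric family of slices is the DFT of a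
real tensor. So it suffices to choose matrix SVDs of the Fourier slices of `A` in a
conjugate-symmetric way: arbitrary ones at one index of each pair `{i, -i}`, their conjugates at
the other, and real ones at the self-conjugate indices `i = -i`, where the slice is a real matrix.
-/

open Matrix BigOperators
noncomputable section

/-- Unfold: stack frontal slices vertically. -/
def unfold {n2 l n3 : ℕ} (B : Fin n3 → Matrix (Fin n2) (Fin l) ℝ) :
    Matrix (Fin n3 × Fin n2) (Fin l) ℝ := Matrix.of fun p c => B p.1 p.2 c

/-- Block-circulant matrix of the frontal slices. -/
def bcirc {n1 n2 n3 : ℕ} (A : Fin n3 → Matrix (Fin n1) (Fin n2) ℝ) :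
    Matrix (Fin n3 × Fin n1) (Fin n3 × Fin n2) ℝ :=
  Matrix.of fun p q => A (p.1 - q.1) p.2 q.2

/-- t-product: fold (bcirc A * unfold B). -/
def tProd {n1 n2 l n3 : ℕ} (A : Fin n3 → Matrix (Fin n1) (Fin n2) ℝ)
    (B : Fin n3 → Matrix (Fin n2) (Fin l) ℝ) : Fin n3 → Matrix (Fin n1) (Fin l) ℝ :=
  fun i => Matrix.of fun a c => (bcirc A * unfold B) (i, a) c

/-- The unnormalized DFT matrix, entries e^{-2πi jk/n}. -/
def dftM (n : ℕ) : Matrix (Fin n) (Fin n) ℂ :=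
  Matrix.of fun j k =>
    Complex.exp (-2 * (Real.pi : ℂ) * Complex.I * (((j : ℕ) : ℂ) * ((k : ℕ) : ℂ)) / (n : ℂ))

/-- DFT along the third mode (applied to each tube). -/
def fourier3 {n1 n2 n3 : ℕ} (A : Fin n3 → Matrix (Fin n1) (Fin n2) ℝ) :
    Fin n3 → Matrix (Fin n1) (Fin n2) ℂ :=
  fun i => Matrix.of fun a b => ∑ k, dftM n3 i k * ((A k a b : ℝ) : ℂ)

/-- Tensor conjugate transpose: transpose each frontal slice and reverse slices 2..n₃. -/
def ctrans {n1 n2 n3 : ℕ} (X : Fin n3 → Matrix (Fin n1) (Fin n2) ℝ) :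
    Fin n3 → Matrix (Fin n2) (Fin n1) ℝ := fun i => (X (-i))ᵀ

/-- Identity tensor: first frontal slice identity, rest zero. -/
def idT (n n3 : ℕ) : Fin n3 → Matrix (Fin n) (Fin n) ℝ :=
  fun i => if (i : ℕ) = 0 then 1 else 0

lemma InnerProductSpace.eq_norm_smul_gramSchmidtOrthonormalBasis {𝕜 ι E : Type*} [RCLike 𝕜]
    [LinearOrder ι] [LocallyFiniteOrderBot ι] [WellFoundedLT ι] [Fintype ι] [NormedAddCommGroup E]
    [InnerProductSpace 𝕜 E] [FiniteDimensional 𝕜 E] (h : Module.finrank 𝕜 E = Fintype.card ι)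
    {f : ι → E} (hf : Pairwise fun i j => inner 𝕜 (f i) (f j) = 0) (i : ι) :
    f i = (‖f i‖ : 𝕜) • gramSchmidtOrthonormalBasis h f i := by
  by_cases hi : f i = 0
  · simp [hi]
  · rw [gramSchmidtOrthonormalBasis_apply_of_orthogonal h hf hi, smul_smul,
      mul_inv_cancel₀ (by simpa using hi), one_smul]

lemma Function.Involutive.exists_semiconj {ι α : Type*} [LinearOrder ι] {τ : ι → ι}
    (hτ : Function.Involutive τ) {σ : α → α} (hσ : Function.Involutive σ) {p : ι → α → Prop}
    (hp : ∀ i a, p i a → p (τ i) (σ a)) (h : ∀ i, ∃ a, p i a ∧ (τ i = i → σ a = a)) :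
    ∃ f : ι → α, (∀ i, p i (f i)) ∧ Function.Semiconj f τ σ := by
  choose g hg hgσ using h
  refine ⟨fun i => if i ≤ τ i then g i else σ (g (τ i)), fun i => ?_, fun i => ?_⟩
  · dsimp only
    split_ifs
    · exact hg i
    · simpa only [hτ i] using hp _ _ (hg (τ i))
  · dsimp only
    rw [hτ i]
    by_cases h₁ : i ≤ τ i <;> by_cases h₂ : τ i ≤ i
    · have hi : τ i = i := le_antisymm h₂ h₁
      rw [if_pos h₁, if_pos h₂, hi, hgσ i hi]
    · rw [if_pos h₁, if_neg h₂]
    · rw [if_neg h₁, if_pos h₂, hσ]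
    · exact ((le_total i (τ i)).elim h₁ h₂).elim

namespace Matrix

structure IsSVD {R : Type*} [Semiring R] [StarRing R] {m n : ℕ} (M : Matrix (Fin m) (Fin n) R)
    (P : Matrix (Fin m) (Fin m) R) (D : Matrix (Fin m) (Fin n) R) (Q : Matrix (Fin n) (Fin n) R) :
    Prop where
  conjTranspose_mul_self_left : Pᴴ * P = 1
  conjTranspose_mul_self_right : Qᴴ * Q = 1
  apply_eq_zero : ∀ (a : Fin m) (b : Fin n), (a : ℕ) ≠ b → D a b = 0
  eq_mul : M = P * D * Qᴴ

namespace IsSVD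

variable {R S : Type*} [Semiring R] [StarRing R] [Semiring S] [StarRing S] {m n : ℕ}
  {M : Matrix (Fin m) (Fin n) R} {P : Matrix (Fin m) (Fin m) R} {D : Matrix (Fin m) (Fin n) R}
  {Q : Matrix (Fin n) (Fin n) R}

lemma map (h : IsSVD M P D Q) (f : R →+* S) (hf : ∀ x, f (star x) = star (f x)) :
    IsSVD (M.map f) (P.map f) (D.map f) (Q.map f) where
  conjTranspose_mul_self_left := by
    rw [← conjTranspose_map _ hf, ← Matrix.map_mul, h.conjTranspose_mul_self_left,
      Matrix.map_one _ f.map_zero f.map_one]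
  conjTranspose_mul_self_right := by
    rw [← conjTranspose_map _ hf, ← Matrix.map_mul, h.conjTranspose_mul_self_right,
      Matrix.map_one _ f.map_zero f.map_one]
  apply_eq_zero a b hab := by rw [map_apply, h.apply_eq_zero a b hab, f.map_zero]
  eq_mul := by rw [h.eq_mul, Matrix.map_mul, Matrix.map_mul, conjTranspose_map _ hf]

lemma conjTranspose (h : IsSVD M P D Q) : IsSVD Mᴴ Q Dᴴ P where
  conjTranspose_mul_self_left := h.conjTranspose_mul_self_right
  conjTranspose_mul_self_right := h.conjTranspose_mul_self_left
  apply_eq_zero a b hab := by rw [conjTranspose_apply, h.apply_eq_zero b a hab.symm, star_zero]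
  eq_mul := by
    rw [h.eq_mul, conjTranspose_mul, conjTranspose_mul, conjTranspose_conjTranspose,
      Matrix.mul_assoc]

end IsSVD

variable {𝕜 : Type*} [RCLike 𝕜]

lemma exists_unitary_conjTranspose_mul_mul_eq_diagonal {m n : Type*} [Fintype m] [Fintype n]
    [DecidableEq n] (M : Matrix m n 𝕜) :
    ∃ W ∈ unitaryGroup n 𝕜, ∃ d : n → 𝕜, (M * W)ᴴ * (M * W) = diagonal d := by
  have hH := isHermitian_conjTranspose_mul_self M
  refine ⟨hH.eigenvectorUnitary, hH.eigenvectorUnitary.2, RCLike.ofReal ∘ hH.eigenvalues, ?_⟩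
  rw [← hH.conjStarAlgAut_star_eigenvectorUnitary, Unitary.conjStarAlgAut_star_apply,
    conjTranspose_mul]
  simp only [star_eq_conjTranspose, Matrix.mul_assoc]

lemma exists_unitary_mul_eq_of_conjTranspose_mul_self_eq_diagonal {m n : ℕ} (hnm : n ≤ m)
    {N : Matrix (Fin m) (Fin n) 𝕜} (hN : ∃ d, Nᴴ * N = diagonal d) :
    ∃ (P : Matrix (Fin m) (Fin m) 𝕜) (D : Matrix (Fin m) (Fin n) 𝕜), Pᴴ * P = 1 ∧
      (∀ (a : Fin m) (b : Fin n), (a : ℕ) ≠ b → D a b = 0) ∧ N = P * D := by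
  obtain ⟨d, hd⟩ := hN
  -- Zero-padding the columns to `m` vectors lets Gram–Schmidt complete the normalized nonzero
  -- columns to an orthonormal basis indexed by `Fin m`.
  set c : Fin m → EuclideanSpace 𝕜 (Fin m) := fun k =>
    WithLp.toLp 2 fun a => if h : (k : ℕ) < n then N a ⟨k, h⟩ else 0
  have hc : Pairwise fun k l => inner 𝕜 (c k) (c l) = 0 := by
    intro k l hkl
    simp only [c, PiLp.inner_apply, RCLike.inner_apply]
    by_cases hk : (k : ℕ) < n
    · by_cases hl : (l : ℕ) < n
      · have h := congr_fun₂ hd ⟨k, hk⟩ ⟨l, hl⟩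
        rw [diagonal_apply_ne _ (by simpa [Fin.ext_iff] using hkl)] at h
        simpa [hk, hl, mul_apply, mul_comm] using h
      · simp [hl]
    · simp [hk]
  have hdim : Module.finrank 𝕜 (EuclideanSpace 𝕜 (Fin m)) = Fintype.card (Fin m) := by simp
  set b := InnerProductSpace.gramSchmidtOrthonormalBasis hdim c
  refine ⟨(EuclideanSpace.basisFun (Fin m) 𝕜).toBasis.toMatrix b.toBasis,
    of fun a j => if (a : ℕ) = j then (‖c a‖ : 𝕜) else 0,
    (EuclideanSpace.basisFun (Fin m) 𝕜).toMatrix_orthonormalBasis_conjTranspose_mul_self b,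
    fun a j h => by simp [h], ?_⟩
  ext a j
  rw [mul_apply, Finset.sum_eq_single (Fin.castLE hnm j)]
  · have h := congr($(InnerProductSpace.eq_norm_smul_gramSchmidtOrthonormalBasis hdim hc
      (Fin.castLE hnm j)) a)
    rw [PiLp.smul_apply, smul_eq_mul] at h
    simp only [Module.Basis.toMatrix_apply, OrthonormalBasis.coe_toBasis_repr_apply,
      EuclideanSpace.basisFun_repr, OrthonormalBasis.coe_toBasis, of_apply, Fin.val_castLE,
      if_true]
    rw [mul_comm, ← h]
    simp [c]
  · intro k _ hk
    have hkj : (k : ℕ) ≠ j := fun h => hk (Fin.ext h)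
    simp [hkj]
  · simp

lemma exists_isSVD_of_le {m n : ℕ} (hnm : n ≤ m) (M : Matrix (Fin m) (Fin n) 𝕜) :
    ∃ P D Q, IsSVD M P D Q := by
  obtain ⟨W, hW, hMW⟩ := exists_unitary_conjTranspose_mul_mul_eq_diagonal M
  obtain ⟨P, D, hP, hD, hPD⟩ :=
    exists_unitary_mul_eq_of_conjTranspose_mul_self_eq_diagonal hnm hMW
  refine ⟨P, D, W, hP, ?_, hD, ?_⟩
  · simpa [star_eq_conjTranspose] using (mem_unitaryGroup_iff').mp hW
  · rw [← hPD, Matrix.mul_assoc, ← star_eq_conjTranspose, mem_unitaryGroup_iff.mp hW,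
      Matrix.mul_one]

lemma exists_isSVD {m n : ℕ} (M : Matrix (Fin m) (Fin n) 𝕜) : ∃ P D Q, IsSVD M P D Q := by
  rcases le_total n m with hnm | hmn
  · exact exists_isSVD_of_le hnm M
  · obtain ⟨P, D, Q, h⟩ := exists_isSVD_of_le hmn Mᴴ
    exact ⟨Q, Dᴴ, P, conjTranspose_conjTranspose M ▸ h.conjTranspose⟩

lemma exists_isSVD_of_map_conj_eq {m n : ℕ} {M : Matrix (Fin m) (Fin n) ℂ}
    (hM : M.map (starRingEnd ℂ) = M) :
    ∃ P D Q, IsSVD M P D Q ∧ P.map (starRingEnd ℂ) = P ∧ D.map (starRingEnd ℂ) = D ∧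
      Q.map (starRingEnd ℂ) = Q := by
  have hre : M = (M.map Complex.re).map Complex.ofRealHom := by
    ext a b
    exact (Complex.conj_eq_iff_re.mp congr($hM a b)).symm
  obtain ⟨P, D, Q, h⟩ := exists_isSVD (M.map Complex.re)
  have hreal : ∀ {k l : ℕ} (X : Matrix (Fin k) (Fin l) ℝ),
      (X.map Complex.ofRealHom).map (starRingEnd ℂ) = X.map Complex.ofRealHom := fun X => by
    ext; simp
  refine ⟨_, _, _, hre ▸ h.map Complex.ofRealHom fun x => (Complex.conj_ofReal x).symm,
    hreal P, hreal D, hreal Q⟩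

lemma exists_isSVD_family_of_conj_symm {k m n : ℕ} [NeZero k]
    (F : Fin k → Matrix (Fin m) (Fin n) ℂ) (hF : ∀ i, F (-i) = (F i).map (starRingEnd ℂ)) :
    ∃ (P : Fin k → Matrix (Fin m) (Fin m) ℂ) (D : Fin k → Matrix (Fin m) (Fin n) ℂ)
      (Q : Fin k → Matrix (Fin n) (Fin n) ℂ), ∀ i, IsSVD (F i) (P i) (D i) (Q i) ∧
        P (-i) = (P i).map (starRingEnd ℂ) ∧ D (-i) = (D i).map (starRingEnd ℂ) ∧
        Q (-i) = (Q i).map (starRingEnd ℂ) := by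
  set σ : Matrix (Fin m) (Fin m) ℂ × Matrix (Fin m) (Fin n) ℂ × Matrix (Fin n) (Fin n) ℂ → _ :=
    fun t => (t.1.map (starRingEnd ℂ), t.2.1.map (starRingEnd ℂ), t.2.2.map (starRingEnd ℂ))
  have hσ : Function.Involutive σ := fun t => by simp [σ, Function.comp_def]
  have hfix : ∀ i, ∃ t, IsSVD (F i) t.1 t.2.1 t.2.2 ∧ (-i = i → σ t = t) := by
    intro i
    by_cases hi : -i = i
    · obtain ⟨P, D, Q, h, hP, hD, hQ⟩ :=
        exists_isSVD_of_map_conj_eq (M := F i) (by rw [← hF, hi])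
      exact ⟨(P, D, Q), h, fun _ => by simp [σ, hP, hD, hQ]⟩
    · obtain ⟨P, D, Q, h⟩ := exists_isSVD (F i)
      exact ⟨(P, D, Q), h, fun h' => absurd h' hi⟩
  obtain ⟨f, hf, hfσ⟩ := neg_involutive.exists_semiconj hσ
    (p := fun i t => IsSVD (F i) t.1 t.2.1 t.2.2) (fun i t h => hF i ▸ h.map _ fun _ => rfl) hfix
  exact ⟨fun i => (f i).1, fun i => (f i).2.1, fun i => (f i).2.2, fun i =>
    ⟨hf i, congr($(hfσ i).1), congr($(hfσ i).2.1), congr($(hfσ i).2.2)⟩⟩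

end Matrix

section DFT

open Complex

variable {n : ℕ}

def dftRoot (n : ℕ) : ℂ := exp (-2 * Real.pi * I / n)

lemma dftM_apply_eq_pow (j k : Fin n) : dftM n j k = dftRoot n ^ ((j : ℕ) * k) := by
  rw [dftRoot, ← exp_nat_mul, dftM, of_apply]
  congr 1
  push_cast
  ring

lemma dftM_comm (j k : Fin n) : dftM n j k = dftM n k j := by
  rw [dftM_apply_eq_pow, dftM_apply_eq_pow, mul_comm]

variable [NeZero n]

lemma isPrimitiveRoot_dftRoot : IsPrimitiveRoot (dftRoot n) n := by
  have := (isPrimitiveRoot_exp n (NeZero.ne n)).inv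
  rwa [← exp_neg, ← neg_div, ← neg_mul, ← neg_mul] at this

def dftChar (i : Fin n) : AddChar (Fin n) ℂ where
  toFun := dftM n i
  map_zero_eq_one' := by simp [dftM_apply_eq_pow]
  map_add_eq_mul' k l := by
    have h : (dftRoot n ^ (i : ℕ)) ^ n = 1 := by
      rw [← pow_mul, mul_comm, pow_mul, isPrimitiveRoot_dftRoot.pow_eq_one, one_pow]
    simp only [dftM_apply_eq_pow, pow_mul, Fin.val_add, ← pow_eq_pow_mod _ h, pow_add]

lemma dftChar_apply (i k : Fin n) : dftChar i k = dftM n i k := rfl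

lemma dftM_add_right (i k l : Fin n) : dftM n i (k + l) = dftM n i k * dftM n i l :=
  (dftChar i).map_add_eq_mul k l

lemma dftChar_injective : Function.Injective (dftChar (n := n)) := by
  intro j j' h
  have h1 := congr($h 1)
  simp only [dftChar_apply, dftM_apply_eq_pow, Fin.val_one'] at h1
  rw [(isPrimitiveRoot_dftRoot.isOfFinOrder (NeZero.ne n)).pow_eq_pow_iff_modEq,
    ← isPrimitiveRoot_dftRoot.eq_orderOf] at h1
  have h2 : (j : ℕ) ≡ j' [MOD n] := by
    simpa using ((Nat.mod_modEq 1 n).symm.mul_left j).trans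
      (h1.trans ((Nat.mod_modEq 1 n).mul_left j'))
  exact Fin.ext (Nat.ModEq.eq_of_lt_of_lt h2 j.isLt j'.isLt)

lemma conjTranspose_dftM_mul_dftM :
    (dftM n)ᴴ * dftM n = (n : ℂ) • (1 : Matrix (Fin n) (Fin n) ℂ) := by
  ext j j'
  have h : ∀ k, star (dftM n k j) * dftM n k j' = ((dftChar j)⁻¹ * dftChar j') k := by
    intro k
    rw [AddChar.mul_apply, AddChar.inv_apply, AddChar.map_neg_eq_conj, dftChar_apply,
      dftChar_apply, dftM_comm k, dftM_comm k]
    rfl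
  simp only [mul_apply, conjTranspose_apply, h, AddChar.sum_eq_ite, ← AddChar.one_eq_zero,
    inv_mul_eq_one, dftChar_injective.eq_iff, Fintype.card_fin, Matrix.smul_apply, one_apply]
  split_ifs <;> simp

lemma dftM_neg_left (i k : Fin n) : dftM n (-i) k = starRingEnd ℂ (dftM n i k) := by
  rw [dftM_comm, ← dftChar_apply, AddChar.map_neg_eq_conj, dftChar_apply, dftM_comm]

lemma dftM_mul_conjTranspose_dftM :
    dftM n * (dftM n)ᴴ = (n : ℂ) • (1 : Matrix (Fin n) (Fin n) ℂ) := by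
  have hn : (n : ℂ) ≠ 0 := Nat.cast_ne_zero.mpr (NeZero.ne n)
  have h : ((n : ℂ)⁻¹ • (dftM n)ᴴ) * dftM n = 1 := by
    rw [Matrix.smul_mul, conjTranspose_dftM_mul_dftM, smul_smul, inv_mul_cancel₀ hn, one_smul]
  rw [← mul_eq_one_comm.mp h, Matrix.mul_smul, smul_smul, mul_inv_cancel₀ hn, one_smul]

lemma dftM_mulVec_injective : Function.Injective (dftM n *ᵥ ·) := by
  intro x y h
  have h' := congrArg ((dftM n)ᴴ *ᵥ ·) h
  simp only [mulVec_mulVec, conjTranspose_dftM_mul_dftM, smul_mulVec, one_mulVec] at h'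
  exact smul_right_injective _ (Nat.cast_ne_zero.mpr (NeZero.ne n)) h'

lemma exists_dftM_mulVec_ofReal_eq {y : Fin n → ℂ} (hy : ∀ i, y (-i) = starRingEnd ℂ (y i)) :
    ∃ x : Fin n → ℝ, dftM n *ᵥ (fun k => (x k : ℂ)) = y := by
  set z := (n : ℂ)⁻¹ • (dftM n)ᴴ *ᵥ y
  have hz : ∀ k, starRingEnd ℂ (z k) = z k := by
    intro k
    simp only [z, Pi.smul_apply, mulVec, dotProduct, conjTranspose_apply, smul_eq_mul, map_mul,
      map_inv₀, map_natCast, map_sum]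
    congr 1
    refine Fintype.sum_equiv (Equiv.neg (Fin n)) _ _ fun i => ?_
    simp [dftM_neg_left, hy]
  refine ⟨fun k => (z k).re, funext fun i => ?_⟩
  simp only [fun k => Complex.conj_eq_iff_re.mp (hz k)]
  rw [mulVec_smul, mulVec_mulVec, dftM_mul_conjTranspose_dftM, smul_mulVec, one_mulVec, smul_smul,
    inv_mul_cancel₀ (Nat.cast_ne_zero.mpr (NeZero.ne n)), one_smul]

end DFT

section Fourier
variable {n1 n2 l n3 : ℕ} [NeZero n3]

lemma fourier3_tProd (A : Fin n3 → Matrix (Fin n1) (Fin n2) ℝ)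
    (B : Fin n3 → Matrix (Fin n2) (Fin l) ℝ) (i : Fin n3) :
    fourier3 (tProd A B) i = fourier3 A i * fourier3 B i := by
  ext a c
  simp only [fourier3, tProd, bcirc, unfold, of_apply, mul_apply, Complex.ofReal_sum,
    Complex.ofReal_mul, Finset.mul_sum, Fintype.sum_prod_type, Finset.sum_mul]
  conv_rhs => rw [Finset.sum_comm]
  rw [Finset.sum_comm]
  refine Finset.sum_congr rfl fun k _ => ?_
  rw [Finset.sum_comm]
  refine Finset.sum_congr rfl fun b _ => ?_
  refine Fintype.sum_equiv (Equiv.subRight k) _ _ fun j => ?_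
  have hχ := dftM_add_right i (j - k) k
  rw [sub_add_cancel] at hχ
  rw [Equiv.subRight_apply, hχ]
  ring

lemma fourier3_ctrans (X : Fin n3 → Matrix (Fin n1) (Fin n2) ℝ) (i : Fin n3) :
    fourier3 (ctrans X) i = (fourier3 X i)ᴴ := by
  ext b a
  simp only [fourier3, ctrans, conjTranspose_apply, of_apply, transpose_apply, star_sum,
    star_mul', Complex.star_def, Complex.conj_ofReal]
  refine Fintype.sum_equiv (Equiv.neg (Fin n3)) _ _ fun k => ?_
  simp [dftM_comm i, dftM_neg_left]

lemma fourier3_idT (n : ℕ) (i : Fin n3) : fourier3 (idT n n3) i = 1 := by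
  ext a b
  rw [fourier3, of_apply, Finset.sum_eq_single 0]
  · simp [idT, dftM_apply_eq_pow, one_apply, apply_ite]
  · intro k _ hk
    simp [idT, Fin.val_eq_zero_iff, hk]
  · simp

lemma fourier3_neg (X : Fin n3 → Matrix (Fin n1) (Fin n2) ℝ) (i : Fin n3) :
    fourier3 X (-i) = (fourier3 X i).map (starRingEnd ℂ) := by
  ext a b
  simp [fourier3, dftM_neg_left]

lemma apply_eq_of_fourier3_apply_eq {X Y : Fin n3 → Matrix (Fin n1) (Fin n2) ℝ} {a : Fin n1}
    {b : Fin n2} (h : ∀ i, fourier3 X i a b = fourier3 Y i a b) (k : Fin n3) :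
    X k a b = Y k a b := by
  have := dftM_mulVec_injective (funext h : (dftM n3 *ᵥ fun k => (X k a b : ℂ)) = _)
  exact_mod_cast congrFun this k

lemma fourier3_injective :
    Function.Injective (fourier3 : (Fin n3 → Matrix (Fin n1) (Fin n2) ℝ) → _) := fun X Y h =>
  funext fun k => Matrix.ext fun a b => apply_eq_of_fourier3_apply_eq (fun i => by rw [h]) k

lemma apply_eq_zero_of_fourier3_apply_eq_zero {X : Fin n3 → Matrix (Fin n1) (Fin n2) ℝ}
    {a : Fin n1} {b : Fin n2} (h : ∀ i, fourier3 X i a b = 0) (k : Fin n3) : X k a b = 0 :=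
  apply_eq_of_fourier3_apply_eq (Y := 0) (fun i => by simpa [fourier3] using h i) k

lemma exists_fourier3_eq (W : Fin n3 → Matrix (Fin n1) (Fin n2) ℂ)
    (hW : ∀ i, W (-i) = (W i).map (starRingEnd ℂ)) : ∃ X, fourier3 X = W := by
  choose x hx using fun a b => exists_dftM_mulVec_ofReal_eq (y := fun i => W i a b)
    fun i => by rw [hW, map_apply]
  exact ⟨fun k => of fun a b => x a b k, funext fun i => by ext a b; exact congrFun (hx a b) i⟩

end Fourier

/-- existence of the t-SVD. -/
theorem tsvd_exists (n1 n2 n3 : ℕ) (A : Fin n3 → Matrix (Fin n1) (Fin n2) ℝ) :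
    ∃ (U : Fin n3 → Matrix (Fin n1) (Fin n1) ℝ)
      (S : Fin n3 → Matrix (Fin n1) (Fin n2) ℝ)
      (V : Fin n3 → Matrix (Fin n2) (Fin n2) ℝ),
      tProd (ctrans U) U = idT n1 n3 ∧
      tProd (ctrans V) V = idT n2 n3 ∧
      (∀ (i : Fin n3) (a : Fin n1) (b : Fin n2), (a : ℕ) ≠ (b : ℕ) → S i a b = 0) ∧
      A = tProd U (tProd S (ctrans V)) := by
  obtain rfl | _ := eq_zero_or_neZero n3
  · exact ⟨0, 0, 0, Subsingleton.elim _ _, Subsingleton.elim _ _, fun i => i.elim0,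
      Subsingleton.elim _ _⟩
  obtain ⟨P, D, Q, h⟩ := exists_isSVD_family_of_conj_symm (fourier3 A) (fourier3_neg A)
  obtain ⟨U, rfl⟩ := exists_fourier3_eq P fun i => (h i).2.1
  obtain ⟨S, rfl⟩ := exists_fourier3_eq D fun i => (h i).2.2.1
  obtain ⟨V, rfl⟩ := exists_fourier3_eq Q fun i => (h i).2.2.2
  refine ⟨U, S, V, fourier3_injective (funext fun i => ?_), fourier3_injective (funext fun i => ?_),
    fun i a b hab => apply_eq_zero_of_fourier3_apply_eq_zero
      (fun j => (h j).1.apply_eq_zero a b hab) i,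
    fourier3_injective (funext fun i => ?_)⟩
  · rw [fourier3_tProd, fourier3_ctrans, fourier3_idT, (h i).1.conjTranspose_mul_self_left]
  · rw [fourier3_tProd, fourier3_ctrans, fourier3_idT, (h i).1.conjTranspose_mul_self_right]
  · rw [fourier3_tProd, fourier3_tProd, fourier3_ctrans, ← Matrix.mul_assoc, (h i).1.eq_mul]
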